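/- Lemma 3.7(ii): Let p ∈ [1,∞) and let u : ℝ^d → ℝ be continuously differentiable with u ∈ L^p(ℝ^d) and ∂_i u ∈ L^p(ℝ^d) for all i. Define the Fourier coefficients û_m = ‖ψ_m‖₁^{−1} ∫_{ℝ^d} ψ_m u dx. Then ( h^d vol(R) )^{1/p} ( Σ_m |û_m|^p )^{1/p} ≤ ‖u‖_{L^p(ℝ^d)}, and for each i ∈ {1,…,d}, ( h^d vol(R) )^{1/p} ( Σ_m |(U_i û)_m|^p )^{1/p} ≤ ‖∂_i u‖_{L^p(ℝ^d)}, where (U_i û)_m = (û_{m+e_i} − û_m)/(r_i h). -/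

import Mathlib

open MeasureTheory

noncomputable section

/-- The canonical hat function on `ℝ`. -/
def hat (t : ℝ) : ℝ := max 0 (1 - |t|)

/-- The `i`-th coordinate of the grid-knot `x_m = v + h * r * m`. -/
def gridKnot (d : ℕ) (h : ℝ) (r : Fin d → ℕ) (v : Fin d → ℝ) (m : Fin d → ℤ) (i : Fin d) : ℝ :=
  v i + h * (r i : ℝ) * (m i : ℝ)

/-- The `d`-dimensional hat function centered at the grid-knot `x_m`. -/
def psi (d : ℕ) (h : ℝ) (r : Fin d → ℕ) (v : Fin d → ℝ) (m : Fin d → ℤ) (x : Fin d → ℝ) : ℝ :=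
  ∏ i, hat ((x i - gridKnot d h r v m i) / (h * (r i : ℝ)))

/-- The hat-function imbedding `u(n) = Σ_m u_m ψ_m`. -/
def imbed (d : ℕ) (h : ℝ) (r : Fin d → ℕ) (v : Fin d → ℝ) (u : (Fin d → ℤ) → ℝ)
    (x : Fin d → ℝ) : ℝ :=
  ∑' m : Fin d → ℤ, u m * psi d h r v m x

/-- `vol(R) = r₁ ⋯ r_d`. -/
def volR (d : ℕ) (r : Fin d → ℕ) : ℝ := ∏ i, (r i : ℝ)

/-- Forward finite difference `(U_i u)_m = (u_{m+e_i} - u_m)/(r_i h)`. -/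
def fdiff (d : ℕ) (h : ℝ) (r : Fin d → ℕ) (u : (Fin d → ℤ) → ℝ) (i : Fin d)
    (m : Fin d → ℤ) : ℝ :=
  (u (m + Pi.single i 1) - u m) / ((r i : ℝ) * h)

/-- The discrete norm `|u|²_{R2} = vol(R) Σ_m u_m²`. -/
def norm2R (d : ℕ) (r : Fin d → ℕ) (u : (Fin d → ℤ) → ℝ) : ℝ :=
  volR d r * ∑' m : Fin d → ℤ, u m ^ 2

/-- The discrete Dirichlet form `q_R(u) = vol(R) Σ_i Σ_m (U_i u)_m²`. -/
def qR (d : ℕ) (h : ℝ) (r : Fin d → ℕ) (u : (Fin d → ℤ) → ℝ) : ℝ :=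
  volR d r * ∑ i : Fin d, ∑' m : Fin d → ℤ, (fdiff d h r u i m) ^ 2


/-- The Fourier coefficients `û_m = ‖ψ_m‖₁⁻¹ (ψ_m | u)`, with `‖ψ_m‖₁ = h^d vol(R)`. -/
def hatCoeff (d : ℕ) (h : ℝ) (r : Fin d → ℕ) (v : Fin d → ℝ) (u : (Fin d → ℝ) → ℝ)
    (m : Fin d → ℤ) : ℝ :=
  (h ^ d * volR d r)⁻¹ * ∫ x : Fin d → ℝ, psi d h r v m x * u x


/-! The functions `ψ_m / (h^d vol(R))` are probability densities and the `ψ_m` form a partition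
of unity, so Jensen's inequality for each `m`, summed over `m`, gives
`h^d vol(R) Σ_m |û_m|^p ≤ ∫ |u|^p`. Translating `ψ_{m+e_i}` onto `ψ_m` shows that `(U_i û)_m` is
the coefficient of the difference quotient of `u` in direction `e_i`; by the fundamental theorem of
calculus, Jensen again and translation invariance, the `L^p` norm of that difference quotient is at
most the `L^p` norm of `∂_i u`. -/

theorem hasSum_prod_apply_of_forall_notMem {ι κ α : Type*} [Fintype ι] [DecidableEq ι]
    [CommSemiring α] [TopologicalSpace α] {f : ι → κ → α} (t : ι → Finset κ)
    (hf : ∀ i k, k ∉ t i → f i k = 0) :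
    HasSum (fun m : ι → κ => ∏ i, f i (m i)) (∏ i, ∑ k ∈ t i, f i k) := by
  rw [Finset.prod_univ_sum]
  refine hasSum_sum_of_ne_finset_zero fun m hm => ?_
  obtain ⟨i, hi⟩ := not_forall.mp (Fintype.mem_piFinset.not.mp hm)
  exact Finset.prod_eq_zero (Finset.mem_univ i) (hf i _ hi)

theorem enorm_integral_rpow_le_lintegral_enorm_rpow {α E : Type*} [MeasurableSpace α]
    [NormedAddCommGroup E] [NormedSpace ℝ E] {μ : Measure α} [IsProbabilityMeasure μ] {p : ℝ}
    (hp : 1 ≤ p) {f : α → E} (hf : AEStronglyMeasurable f μ) :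
    ‖∫ x, f x ∂μ‖ₑ ^ p ≤ ∫⁻ x, ‖f x‖ₑ ^ p ∂μ := by
  have hp0 : 0 < p := zero_lt_one.trans_le hp
  have hL1 : ‖∫ x, f x ∂μ‖ₑ ≤ eLpNorm' f p μ :=
    calc ‖∫ x, f x ∂μ‖ₑ ≤ ∫⁻ x, ‖f x‖ₑ ∂μ := enorm_integral_le_lintegral_enorm f
      _ = eLpNorm' f 1 μ := by simp [eLpNorm']
      _ ≤ eLpNorm' f p μ := eLpNorm'_le_eLpNorm'_of_exponent_le one_pos hp μ hf
  calc ‖∫ x, f x ∂μ‖ₑ ^ p ≤ eLpNorm' f p μ ^ p := ENNReal.rpow_le_rpow hL1 hp0.le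
    _ = ∫⁻ x, ‖f x‖ₑ ^ p ∂μ := by
      rw [eLpNorm', ← ENNReal.rpow_mul, one_div_mul_cancel hp0.ne', ENNReal.rpow_one]

theorem ofReal_mul_tsum_enorm_average_rpow_le {α ι : Type*} [MeasurableSpace α] [Countable ι]
    {μ : Measure α} {φ : ι → α → ℝ} (hφ_nonneg : ∀ m x, 0 ≤ φ m x)
    (hφ_meas : ∀ m, Measurable (φ m)) (hφ_sum : ∀ x, HasSum (fun m => φ m x) 1) {c : ℝ}
    (hc : 0 < c) (hφ_int : ∀ m, Integrable (φ m) μ) (hφ_mass : ∀ m, ∫ x, φ m x ∂μ = c)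
    {p : ℝ} (hp : 1 ≤ p) {g : α → ℝ} (hg : AEStronglyMeasurable g μ) :
    ENNReal.ofReal c * ∑' m, ‖c⁻¹ * ∫ x, φ m x * g x ∂μ‖ₑ ^ p ≤ ∫⁻ x, ‖g x‖ₑ ^ p ∂μ := by
  set C := ENNReal.ofReal c
  have hC0 : C ≠ 0 := (ENNReal.ofReal_pos.mpr hc).ne'
  have hgp : AEMeasurable (fun x => ‖g x‖ₑ ^ p) μ := hg.enorm.pow_const p
  -- `φ m / c` is a probability density, and Jensen's inequality applies to it.
  have hterm (m : ι) : ‖c⁻¹ * ∫ x, φ m x * g x ∂μ‖ₑ ^ p ≤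
      C⁻¹ * ∫⁻ x, ENNReal.ofReal (φ m x) * ‖g x‖ₑ ^ p ∂μ := by
    let ν := C⁻¹ • μ.withDensity fun x => ENNReal.ofReal (φ m x)
    have hmass : ∫⁻ x, ENNReal.ofReal (φ m x) ∂μ = C := by
      rw [← ofReal_integral_eq_lintegral_ofReal (hφ_int m) (.of_forall (hφ_nonneg m)), hφ_mass]
    have : IsProbabilityMeasure ν := ⟨by
      simp [ν, withDensity_apply _ MeasurableSet.univ, hmass,
        ENNReal.inv_mul_cancel hC0 ENNReal.ofReal_ne_top]⟩
    have hint : ∫ x, g x ∂ν = c⁻¹ * ∫ x, φ m x * g x ∂μ := by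
      rw [integral_smul_measure, integral_withDensity_eq_integral_toReal_smul
        (hφ_meas m).ennreal_ofReal (.of_forall fun _ => ENNReal.ofReal_lt_top)]
      simp [ENNReal.toReal_ofReal (hφ_nonneg m _), ENNReal.toReal_ofReal hc.le, C]
    have hlint : ∫⁻ x, ‖g x‖ₑ ^ p ∂ν = C⁻¹ * ∫⁻ x, ENNReal.ofReal (φ m x) * ‖g x‖ₑ ^ p ∂μ := by
      rw [lintegral_smul_measure, lintegral_withDensity_eq_lintegral_mul₀
        (hφ_meas m).ennreal_ofReal.aemeasurable hgp]
      rfl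
    rw [← hint, ← hlint]
    exact enorm_integral_rpow_le_lintegral_enorm_rpow hp
      ((hg.mono_ac (withDensity_absolutelyContinuous _ _)).smul_measure _)
  have hsum (x : α) : ∑' m, ENNReal.ofReal (φ m x) = 1 := by
    rw [← ENNReal.ofReal_tsum_of_nonneg (hφ_nonneg · x) (hφ_sum x).summable, (hφ_sum x).tsum_eq,
      ENNReal.ofReal_one]
  calc C * ∑' m, ‖c⁻¹ * ∫ x, φ m x * g x ∂μ‖ₑ ^ p
      ≤ C * ∑' m, C⁻¹ * ∫⁻ x, ENNReal.ofReal (φ m x) * ‖g x‖ₑ ^ p ∂μ := by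
        gcongr with m; exact hterm m
    _ = ∫⁻ x, ∑' m, ENNReal.ofReal (φ m x) * ‖g x‖ₑ ^ p ∂μ := by
      rw [ENNReal.tsum_mul_left, ← mul_assoc, ENNReal.mul_inv_cancel hC0 ENNReal.ofReal_ne_top,
        one_mul]
      exact (lintegral_tsum fun m => (hφ_meas m).ennreal_ofReal.aemeasurable.mul hgp).symm
    _ = ∫⁻ x, ‖g x‖ₑ ^ p ∂μ := by simp_rw [ENNReal.tsum_mul_right, hsum, one_mul]

theorem rpow_mul_tsum_rpow_le_integral_rpow {α ι : Type*} [MeasurableSpace α] {μ : Measure α}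
    {c p : ℝ} (hc : 0 < c) (hp : 0 < p) {F : ι → ℝ} {f : α → ℝ}
    (hf : MemLp f (ENNReal.ofReal p) μ)
    (H : ENNReal.ofReal c * ∑' m, ‖F m‖ₑ ^ p ≤ ∫⁻ x, ‖f x‖ₑ ^ p ∂μ) :
    c ^ (1 / p) * (∑' m, |F m| ^ p) ^ (1 / p) ≤ (∫ x, |f x| ^ p ∂μ) ^ (1 / p) := by
  have henorm (y : ℝ) : ‖y‖ₑ ^ p = ENNReal.ofReal (|y| ^ p) := by
    rw [Real.enorm_eq_ofReal_abs, ENNReal.ofReal_rpow_of_nonneg (abs_nonneg y) hp.le]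
  have hI_nonneg : 0 ≤ ∫ x, |f x| ^ p ∂μ := integral_nonneg fun x => by positivity
  by_cases hS : Summable fun m => |F m| ^ p
  swap
  · rw [tsum_eq_zero_of_not_summable hS, Real.zero_rpow (one_div_ne_zero hp.ne'), mul_zero]
    positivity
  have hint : Integrable (fun x => |f x| ^ p) μ := by
    simpa [ENNReal.toReal_ofReal hp.le] using
      hf.integrable_norm_rpow (ENNReal.ofReal_pos.mpr hp).ne' ENNReal.ofReal_ne_top
  have hreal : c * ∑' m, |F m| ^ p ≤ ∫ x, |f x| ^ p ∂μ := by
    rw [← ENNReal.ofReal_le_ofReal_iff hI_nonneg, ENNReal.ofReal_mul hc.le,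
      ENNReal.ofReal_tsum_of_nonneg (fun m => by positivity) hS,
      ofReal_integral_eq_lintegral_ofReal hint (.of_forall fun x => by positivity)]
    simpa only [henorm] using H
  rw [← Real.mul_rpow hc.le (tsum_nonneg fun m => by positivity)]
  exact Real.rpow_le_rpow (by positivity) hreal (by positivity)

theorem lintegral_enorm_sub_div_rpow_le {E : Type*} [NormedAddCommGroup E] [NormedSpace ℝ E]
    [MeasurableSpace E] [BorelSpace E] {μ : Measure E} [μ.IsAddRightInvariant] [SFinite μ]
    {u : E → ℝ} (hu : ContDiff ℝ 1 u) (e : E) (s : ℝ) {p : ℝ} (hp : 1 ≤ p) :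
    ∫⁻ y, ‖(u (y + s • e) - u y) / s‖ₑ ^ p ∂μ ≤ ∫⁻ y, ‖fderiv ℝ u y e‖ₑ ^ p ∂μ := by
  rcases eq_or_ne s 0 with rfl | hs
  · simp [ENNReal.zero_rpow_of_pos (zero_lt_one.trans_le hp)]
  set D : E → ℝ := fun z => fderiv ℝ u z e
  have hD : Continuous D := (hu.continuous_fderiv one_ne_zero).clm_apply continuous_const
  have hline : Continuous fun q : E × ℝ => D (q.1 + q.2 • s • e) := hD.comp (by fun_prop)
  let ν : Measure ℝ := volume.restrict (Set.Ioc 0 1)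
  have : IsProbabilityMeasure ν := ⟨by simp [ν]⟩
  have hftc (y : E) : (u (y + s • e) - u y) / s = ∫ t, D (y + t • s • e) ∂ν := by
    have hderiv (t : ℝ) :
        HasDerivAt (fun t : ℝ => u (y + t • s • e)) (D (y + t • s • e) * s) t := by
      have := ((hu.differentiable one_ne_zero) _).hasFDerivAt.comp_hasDerivAt t
        (((hasDerivAt_id t).smul_const (s • e)).const_add y)
      simp only [id, one_smul, map_smul, smul_eq_mul] at this
      rw [mul_comm]
      exact this
    have hcont : Continuous fun t : ℝ => D (y + t • s • e) * s :=
      (hline.comp (Continuous.prodMk_right y)).mul continuous_const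
    rw [← intervalIntegral.integral_of_le zero_le_one, div_eq_iff hs,
      ← intervalIntegral.integral_mul_const,
      intervalIntegral.integral_eq_sub_of_hasDerivAt (fun t _ => hderiv t)
        (hcont.intervalIntegrable 0 1)]
    simp
  calc ∫⁻ y, ‖(u (y + s • e) - u y) / s‖ₑ ^ p ∂μ
      = ∫⁻ y, ‖∫ t, D (y + t • s • e) ∂ν‖ₑ ^ p ∂μ := by simp_rw [hftc]
    _ ≤ ∫⁻ y, ∫⁻ t, ‖D (y + t • s • e)‖ₑ ^ p ∂ν ∂μ := lintegral_mono fun y =>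
        enorm_integral_rpow_le_lintegral_enorm_rpow hp
          (hline.comp (Continuous.prodMk_right y)).aestronglyMeasurable
    _ = ∫⁻ t, ∫⁻ y, ‖D (y + t • s • e)‖ₑ ^ p ∂μ ∂ν :=
        lintegral_lintegral_swap (hline.measurable.enorm.pow_const p).aemeasurable
    _ = ∫⁻ y, ‖D y‖ₑ ^ p ∂μ := by
        simp_rw [lintegral_add_right_eq_self (μ := μ) (fun y => ‖D y‖ₑ ^ p)]
        simp

lemma hat_nonneg (t : ℝ) : 0 ≤ hat t := le_max_left _ _

lemma continuous_hat : Continuous hat := by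
  unfold hat; fun_prop

lemma hat_eq_zero_of_one_le_abs {t : ℝ} (ht : 1 ≤ |t|) : hat t = 0 :=
  max_eq_left (by linarith)

lemma hat_sub_intCast_eq_zero {t : ℝ} {k : ℤ} (hk : k ∉ ({⌊t⌋, ⌊t⌋ + 1} : Finset ℤ)) :
    hat (t - k) = 0 := by
  simp only [Finset.mem_insert, Finset.mem_singleton, not_or] at hk
  have h0 := Int.floor_le t
  have h1 := Int.lt_floor_add_one t
  apply hat_eq_zero_of_one_le_abs
  rcases lt_or_gt_of_ne hk.1 with hlt | hgt
  · have : (k : ℝ) + 1 ≤ ⌊t⌋ := by exact_mod_cast hlt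
    exact le_abs.mpr (Or.inl (by linarith))
  · have : (⌊t⌋ : ℝ) + 2 ≤ k := by exact_mod_cast (by omega : ⌊t⌋ + 2 ≤ k)
    exact le_abs.mpr (Or.inr (by linarith))

lemma sum_hat_sub_floor (t : ℝ) : ∑ k ∈ ({⌊t⌋, ⌊t⌋ + 1} : Finset ℤ), hat (t - k) = 1 := by
  have h0 := Int.floor_le t
  have h1 := Int.lt_floor_add_one t
  rw [Finset.sum_pair (by omega)]
  simp only [hat, Int.cast_add, Int.cast_one]
  rw [abs_of_nonneg (by linarith), abs_of_nonpos (by linarith), max_eq_right (by linarith),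
    max_eq_right (by linarith)]
  ring

lemma hasSum_prod_hat_sub_intCast {ι : Type*} [Fintype ι] (t : ι → ℝ) :
    HasSum (fun m : ι → ℤ => ∏ i, hat (t i - m i)) 1 := by
  classical
  simpa only [sum_hat_sub_floor, Finset.prod_const_one] using
    hasSum_prod_apply_of_forall_notMem (f := fun i (k : ℤ) => hat (t i - k))
      (fun i => {⌊t i⌋, ⌊t i⌋ + 1}) fun i k hk => hat_sub_intCast_eq_zero hk

lemma integral_hat : ∫ t, hat t = 1 := by
  have hIoi : ∫ t in Set.Ioi (0 : ℝ), max 0 (1 - t) = ∫ t in (0 : ℝ)..1, (1 - t) := by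
    have hout : ∀ t ∈ Set.Ioi (0 : ℝ) \ Set.Ioc 0 1, max 0 (1 - t) = 0 := fun t ht =>
      max_eq_left (by linarith [not_le.mp fun h => ht.2 ⟨ht.1, h⟩])
    rw [intervalIntegral.integral_of_le zero_le_one,
      setIntegral_eq_of_subset_of_forall_sdiff_eq_zero measurableSet_Ioi Set.Ioc_subset_Ioi_self
        hout]
    refine setIntegral_congr_fun measurableSet_Ioc fun t ht => max_eq_right (by linarith [ht.2])
  have hfold : hat = fun t => max 0 (1 - |t|) := rfl
  rw [hfold, integral_comp_abs (f := fun t => max 0 (1 - t)), hIoi,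
    intervalIntegral.integral_sub intervalIntegrable_const intervalIntegral.intervalIntegrable_id,
    integral_id]
  norm_num

lemma integral_hat_sub_div {b s : ℝ} (hs : 0 < s) : ∫ y, hat ((y - b) / s) = s := by
  rw [integral_sub_right_eq_self (fun y => hat (y / s)) b, Measure.integral_comp_div hat s,
    integral_hat, abs_of_pos hs, smul_eq_mul, mul_one]

section Psi

variable {d : ℕ} {h : ℝ} {r : Fin d → ℕ} {v : Fin d → ℝ}

lemma psi_nonneg (m : Fin d → ℤ) (x : Fin d → ℝ) : 0 ≤ psi d h r v m x :=
  Finset.prod_nonneg fun _ _ => hat_nonneg _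

lemma continuous_psi (m : Fin d → ℤ) : Continuous (psi d h r v m) :=
  continuous_finsetProd _ fun i _ => continuous_hat.comp (by fun_prop)

lemma psi_eq_prod_hat_sub (hh : 0 < h) (hr : ∀ i, 0 < r i) (m : Fin d → ℤ)
    (x : Fin d → ℝ) : psi d h r v m x = ∏ i, hat ((x i - v i) / (h * r i) - m i) := by
  refine Finset.prod_congr rfl fun i _ => congrArg hat ?_
  have hri : (r i : ℝ) ≠ 0 := Nat.cast_ne_zero.mpr (hr i).ne'
  have hh0 : h ≠ 0 := hh.ne'
  rw [gridKnot]
  field_simp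
  ring

lemma hasSum_psi (hh : 0 < h) (hr : ∀ i, 0 < r i) (x : Fin d → ℝ) :
    HasSum (fun m => psi d h r v m x) 1 := by
  simpa only [psi_eq_prod_hat_sub hh hr] using hasSum_prod_hat_sub_intCast _

lemma hasCompactSupport_psi (hh : 0 < h) (hr : ∀ i, 0 < r i) (m : Fin d → ℤ) :
    HasCompactSupport (psi d h r v m) := by
  refine HasCompactSupport.intro (isCompact_univ_pi fun i => isCompact_Icc
    (a := gridKnot d h r v m i - h * r i) (b := gridKnot d h r v m i + h * r i)) fun x hx => ?_
  obtain ⟨i, hi⟩ := not_forall.mp (Set.mem_univ_pi.not.mp hx)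
  have hs : (0 : ℝ) < h * r i := mul_pos hh (Nat.cast_pos.mpr (hr i))
  refine Finset.prod_eq_zero (Finset.mem_univ i) (hat_eq_zero_of_one_le_abs ?_)
  rw [abs_div, abs_of_pos hs, one_le_div hs]
  by_contra hlt
  obtain ⟨h1, h2⟩ := abs_sub_lt_iff.mp (not_le.mp hlt)
  exact hi ⟨by linarith, by linarith⟩

lemma integrable_psi_mul (hh : 0 < h) (hr : ∀ i, 0 < r i) (m : Fin d → ℤ)
    {u : (Fin d → ℝ) → ℝ} (hu : Continuous u) : Integrable fun x => psi d h r v m x * u x :=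
  ((continuous_psi m).mul hu).integrable_of_hasCompactSupport
    (hasCompactSupport_psi hh hr m).mul_right

lemma integral_psi (hh : 0 < h) (hr : ∀ i, 0 < r i) (m : Fin d → ℤ) :
    ∫ x, psi d h r v m x = h ^ d * volR d r := by
  unfold psi
  rw [integral_fintype_prod_volume_eq_prod (𝕜 := ℝ)
    (fun i y => hat ((y - gridKnot d h r v m i) / (h * r i)))]
  simp_rw [integral_hat_sub_div (mul_pos hh (Nat.cast_pos.mpr (hr _)))]
  rw [Finset.prod_mul_distrib, Finset.prod_const, Finset.card_univ, Fintype.card_fin, volR]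

lemma psi_add_single (i : Fin d) (m : Fin d → ℤ) (x : Fin d → ℝ) :
    psi d h r v (m + Pi.single i 1) x = psi d h r v m (x - (r i * h) • Pi.single i 1) := by
  refine Finset.prod_congr rfl fun j _ => ?_
  rcases eq_or_ne j i with rfl | hji
  · simp only [gridKnot, Pi.add_apply, Pi.sub_apply, Pi.smul_apply, Pi.single_eq_same,
      smul_eq_mul, mul_one, Int.cast_add, Int.cast_one]
    congr 1
    ring
  · simp [gridKnot, hji]

lemma hatCoeff_add_single (i : Fin d) (m : Fin d → ℤ) (u : (Fin d → ℝ) → ℝ) :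
    hatCoeff d h r v u (m + Pi.single i 1) =
      hatCoeff d h r v (fun y => u (y + (r i * h) • Pi.single i 1)) m := by
  simp only [hatCoeff, psi_add_single]
  congr 1
  rw [eq_comm, ← integral_sub_right_eq_self (μ := volume) _ ((r i * h) • Pi.single i 1)]
  simp only [sub_add_cancel]

lemma fdiff_hatCoeff (hh : 0 < h) (hr : ∀ i, 0 < r i) {u : (Fin d → ℝ) → ℝ}
    (hu : Continuous u) (i : Fin d) (m : Fin d → ℤ) :
    fdiff d h r (hatCoeff d h r v u) i m = hatCoeff d h r v
      (fun y => (u (y + (r i * h) • Pi.single i 1) - u y) / (r i * h)) m := by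
  rw [fdiff, hatCoeff_add_single, hatCoeff, hatCoeff, hatCoeff, ← mul_sub, mul_div_assoc,
    ← integral_sub (integrable_psi_mul (u := fun y => u (y + _)) hh hr m (by fun_prop))
      (integrable_psi_mul hh hr m hu), ← integral_div]
  simp_rw [← mul_sub, mul_div_assoc]

lemma volR_pos (hr : ∀ i, 0 < r i) : 0 < volR d r :=
  Finset.prod_pos fun i _ => Nat.cast_pos.mpr (hr i)

lemma ofReal_mul_tsum_enorm_hatCoeff_rpow_le (hh : 0 < h) (hr : ∀ i, 0 < r i) {p : ℝ}
    (hp : 1 ≤ p) {u : (Fin d → ℝ) → ℝ} (hu : AEStronglyMeasurable u) :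
    ENNReal.ofReal (h ^ d * volR d r) * ∑' m, ‖hatCoeff d h r v u m‖ₑ ^ p ≤
      ∫⁻ x, ‖u x‖ₑ ^ p :=
  ofReal_mul_tsum_enorm_average_rpow_le psi_nonneg (fun m => (continuous_psi m).measurable)
    (hasSum_psi hh hr) (mul_pos (pow_pos hh d) (volR_pos hr))
    (fun m => (continuous_psi m).integrable_of_hasCompactSupport (hasCompactSupport_psi hh hr m))
    (integral_psi hh hr) hp hu

end Psi

theorem hatCoeff_Lp_bounds_general (d : ℕ) (h : ℝ) (hh : 0 < h)
    (r : Fin d → ℕ) (hr : ∀ i, 0 < r i) (v : Fin d → ℝ) (p : ℝ) (hp : 1 ≤ p)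
    (u : (Fin d → ℝ) → ℝ) (hC1 : ContDiff ℝ 1 u)
    (huLp : MemLp u (ENNReal.ofReal p) (volume : Measure (Fin d → ℝ)))
    (hduLp : ∀ i : Fin d, MemLp (fun x => fderiv ℝ u x (Pi.single i 1))
      (ENNReal.ofReal p) (volume : Measure (Fin d → ℝ))) :
    (h ^ d * volR d r) ^ (1 / p) *
        (∑' m : Fin d → ℤ, |hatCoeff d h r v u m| ^ p) ^ (1 / p) ≤
        (∫ x : Fin d → ℝ, |u x| ^ p) ^ (1 / p) ∧
      ∀ i : Fin d,
        (h ^ d * volR d r) ^ (1 / p) *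
            (∑' m : Fin d → ℤ, |fdiff d h r (hatCoeff d h r v u) i m| ^ p) ^ (1 / p) ≤
          (∫ x : Fin d → ℝ, |fderiv ℝ u x (Pi.single i 1)| ^ p) ^ (1 / p) := by
  have hc : 0 < h ^ d * volR d r := mul_pos (pow_pos hh d) (volR_pos hr)
  have hp0 : 0 < p := zero_lt_one.trans_le hp
  have hu : Continuous u := hC1.continuous
  refine ⟨rpow_mul_tsum_rpow_le_integral_rpow hc hp0 huLp
    (ofReal_mul_tsum_enorm_hatCoeff_rpow_le hh hr hp hu.aestronglyMeasurable), fun i => ?_⟩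
  refine rpow_mul_tsum_rpow_le_integral_rpow hc hp0 (hduLp i) ?_
  simp_rw [fdiff_hatCoeff hh hr hu i]
  exact (ofReal_mul_tsum_enorm_hatCoeff_rpow_le hh hr hp
    (by fun_prop : Continuous fun y => (u (y + _) - u y) / _).aestronglyMeasurable).trans
    (lintegral_enorm_sub_div_rpow_le hC1 _ _ hp)

/-- Lemma 3.7(ii): for a `C¹` function `u` with `u, ∂_i u ∈ L^p`, the Fourier coefficients
satisfy `(h^d vol(R))^{1/p} (Σ_m |û_m|^p)^{1/p} ≤ ‖u‖_{L^p}` and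
`(h^d vol(R))^{1/p} (Σ_m |(U_i û)_m|^p)^{1/p} ≤ ‖∂_i u‖_{L^p}`. -/
theorem hatCoeff_Lp_bounds (d : ℕ) (hd : 1 ≤ d) (h : ℝ) (hh : 0 < h)
    (r : Fin d → ℕ) (hr : ∀ i, 0 < r i) (v : Fin d → ℝ) (p : ℝ) (hp : 1 ≤ p)
    (u : (Fin d → ℝ) → ℝ) (hC1 : ContDiff ℝ 1 u)
    (huLp : MemLp u (ENNReal.ofReal p) (volume : Measure (Fin d → ℝ)))
    (hduLp : ∀ i : Fin d, MemLp (fun x => fderiv ℝ u x (Pi.single i 1))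
      (ENNReal.ofReal p) (volume : Measure (Fin d → ℝ))) :
    (h ^ d * volR d r) ^ (1 / p) *
        (∑' m : Fin d → ℤ, |hatCoeff d h r v u m| ^ p) ^ (1 / p) ≤
        (∫ x : Fin d → ℝ, |u x| ^ p) ^ (1 / p) ∧
      ∀ i : Fin d,
        (h ^ d * volR d r) ^ (1 / p) *
            (∑' m : Fin d → ℤ, |fdiff d h r (hatCoeff d h r v u) i m| ^ p) ^ (1 / p) ≤
          (∫ x : Fin d → ℝ, |fderiv ℝ u x (Pi.single i 1)| ^ p) ^ (1 / p) :=
  hatCoeff_Lp_bounds_general d h hh r hr v p hp u hC1 huLp hduLp
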